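/- arXiv:1703.04749 — 2 statements merged into one kernel-verified Lean document; each statement's English description precedes it below -/
import Mathlib

section
/- Let X be a strictly convex real Banach space with X ≠ {0}. Then there exists a convex combination of slices of the closed unit ball B_X which contains no point of the unit sphere S_X. -/
open Metric Set

/-- A slice of the closed unit ball of `X`: the set of points of the ball where a
norm-one functional `f` is larger than `1 - α`, for some `α > 0`. -/
def IsSlice {X : Type*} [NormedAddCommGroup X] [NormedSpace ℝ X] (S : Set X) : Prop :=
  ∃ (f : X →L[ℝ] ℝ) (α : ℝ), ‖f‖ = 1 ∧ 0 < α ∧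
    S = {x : X | ‖x‖ ≤ 1 ∧ 1 - α < f x}

/-- A convex combination of slices of the closed unit ball of `X`. -/
def IsCCS {X : Type*} [NormedAddCommGroup X] [NormedSpace ℝ X] (C : Set X) : Prop :=
  ∃ (n : ℕ) (lam : Fin n → ℝ) (S : Fin n → Set X),
    0 < n ∧ (∀ i, 0 ≤ lam i ∧ lam i ≤ 1) ∧ (∑ i, lam i) = 1 ∧
    (∀ i, IsSlice (S i)) ∧
    C = {z : X | ∃ x : Fin n → X, (∀ i, x i ∈ S i) ∧ z = ∑ i, lam i • x i}

/-!
The slices `{f > 0}` and `{-f > 0}` of the unit ball, for any norm-one functional `f`, are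
disjoint. In a strictly convex space a proper convex combination of two distinct points of
the closed unit ball lies in the open unit ball, so every point of
`½ {f > 0} + ½ {-f > 0}` has norm `< 1`.
-/

open Pointwise

section

variable {X : Type*} [NormedAddCommGroup X] [NormedSpace ℝ X]

lemma IsSlice.subset_closedBall {S : Set X} (hS : IsSlice S) : S ⊆ closedBall 0 1 := by
  obtain ⟨f, α, -, -, rfl⟩ := hS
  exact fun x hx => mem_closedBall_zero_iff.2 hx.1

lemma exists_disjoint_slices [Nontrivial X] :
    ∃ S T : Set X, IsSlice S ∧ IsSlice T ∧ Disjoint S T := by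
  obtain ⟨x₀, hx₀⟩ := exists_ne (0 : X)
  obtain ⟨f, hf, -⟩ := exists_dual_vector ℝ x₀ (norm_ne_zero_iff.mpr hx₀)
  refine ⟨_, _, ⟨f, 1, hf, one_pos, rfl⟩, ⟨-f, 1, by rwa [norm_neg], one_pos, rfl⟩, ?_⟩
  rw [Set.disjoint_left]
  rintro x ⟨-, hfx⟩ ⟨-, hnfx⟩
  rw [neg_apply] at hnfx
  linarith

lemma isCCS_smul_add_smul {S T : Set X} (hS : IsSlice S) (hT : IsSlice T) {t : ℝ}
    (ht₀ : 0 ≤ t) (ht₁ : t ≤ 1) : IsCCS (t • S + (1 - t) • T) := by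
  refine ⟨2, ![t, 1 - t], ![S, T], two_pos, ?_, by simp, ?_, ?_⟩
  · intro i
    fin_cases i <;> simp [ht₀, ht₁]
  · intro i
    fin_cases i <;> assumption
  · ext z
    simp only [Set.mem_add, Set.mem_smul_set, Fin.forall_fin_two, Fin.sum_univ_two, mem_ofPred_eq,
      Matrix.cons_val_zero, Matrix.cons_val_one]
    constructor
    · rintro ⟨_, ⟨x, hx, rfl⟩, _, ⟨y, hy, rfl⟩, rfl⟩
      exact ⟨![x, y], ⟨hx, hy⟩, rfl⟩
    · rintro ⟨x, ⟨hx, hy⟩, rfl⟩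
      exact ⟨_, ⟨x 0, hx, rfl⟩, _, ⟨x 1, hy, rfl⟩, rfl⟩

lemma smul_add_smul_inter_sphere_eq_empty [StrictConvexSpace ℝ X] {S T : Set X}
    (hS : S ⊆ closedBall 0 1) (hT : T ⊆ closedBall 0 1) (hST : Disjoint S T) {t : ℝ}
    (ht₀ : 0 < t) (ht₁ : t < 1) : (t • S + (1 - t) • T) ∩ sphere 0 1 = ∅ := by
  refine eq_empty_iff_forall_notMem.2 ?_
  rintro _ ⟨⟨_, ⟨x, hx, rfl⟩, _, ⟨y, hy, rfl⟩, rfl⟩, hz⟩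
  have hlt : ‖t • x + (1 - t) • y‖ < 1 :=
    norm_combo_lt_of_ne (mem_closedBall_zero_iff.1 (hS hx)) (mem_closedBall_zero_iff.1 (hT hy))
      (hST.ne_of_mem hx hy) ht₀ (sub_pos.2 ht₁) (add_sub_cancel t 1)
  exact hlt.ne (mem_sphere_zero_iff_norm.1 hz)

end

theorem exists_ccs_missing_sphere_of_strictConvex_general
    {X : Type*} [NormedAddCommGroup X] [NormedSpace ℝ X]
    [StrictConvexSpace ℝ X] [Nontrivial X] :
    ∃ C : Set X, IsCCS C ∧ C ∩ sphere (0 : X) 1 = ∅ := by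
  obtain ⟨S, T, hS, hT, hST⟩ := exists_disjoint_slices (X := X)
  exact ⟨_, isCCS_smul_add_smul hS hT (by norm_num : (0 : ℝ) ≤ 1 / 2) (by norm_num),
    smul_add_smul_inter_sphere_eq_empty hS.subset_closedBall hT.subset_closedBall hST
      (by norm_num) (by norm_num)⟩

theorem exists_ccs_missing_sphere_of_strictConvex
    {X : Type*} [NormedAddCommGroup X] [NormedSpace ℝ X] [CompleteSpace X]
    [StrictConvexSpace ℝ X] [Nontrivial X] :
    ∃ C : Set X, IsCCS C ∧ C ∩ sphere (0 : X) 1 = ∅ :=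
  exists_ccs_missing_sphere_of_strictConvex_general
end

section
/- Let X be a real Banach space such that every convex combination of slices of the closed unit ball B_X intersects the unit sphere S_X. Then for every convex combination of slices C of B_X there exist x, y ∈ C with ‖x − y‖ = 2 (that is, every convex combination of slices of B_X has diameter two and the diameter is attained). -/
/-! If `C = ∑ λᵢ Sᵢ` is a convex combination of slices, then so is
`½ C + ½ (-C) = ∑ (λᵢ/2) Sᵢ + ∑ (λᵢ/2) (-Sᵢ)`, because `-S(B_X, f, α) = S(B_X, -f, α)`.
A point `z = ½ x - ½ y` of it on the unit sphere, with `x, y ∈ C`, gives `‖x - y‖ = 2‖z‖ = 2`. -/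

open Metric Set

open scoped Pointwise

section

variable {X : Type*} [NormedAddCommGroup X] [NormedSpace ℝ X]

def weightedSum {n : ℕ} (lam : Fin n → ℝ) (S : Fin n → Set X) : Set X :=
  {z : X | ∃ x : Fin n → X, (∀ i, x i ∈ S i) ∧ z = ∑ i, lam i • x i}

theorem isCCS_iff {C : Set X} :
    IsCCS C ↔ ∃ (n : ℕ) (lam : Fin n → ℝ) (S : Fin n → Set X),
      0 < n ∧ (∀ i, 0 ≤ lam i ∧ lam i ≤ 1) ∧ (∑ i, lam i) = 1 ∧
      (∀ i, IsSlice (S i)) ∧ C = weightedSum lam S :=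
  Iff.rfl

theorem smul_weightedSum {n : ℕ} (t : ℝ) (lam : Fin n → ℝ) (S : Fin n → Set X) :
    t • weightedSum lam S = weightedSum (t • lam) S := by
  ext z
  simp only [mem_smul_set, weightedSum, mem_ofPred_eq, Pi.smul_apply, smul_eq_mul, mul_smul,
    ← Finset.smul_sum]
  constructor
  · rintro ⟨_, ⟨x, hx, rfl⟩, rfl⟩
    exact ⟨x, hx, rfl⟩
  · rintro ⟨x, hx, rfl⟩
    exact ⟨_, ⟨x, hx, rfl⟩, rfl⟩

theorem neg_weightedSum {n : ℕ} (lam : Fin n → ℝ) (S : Fin n → Set X) :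
    -weightedSum lam S = weightedSum lam (-S) := by
  ext z
  simp only [weightedSum, mem_neg, mem_ofPred_eq, Pi.neg_apply]
  constructor
  · rintro ⟨x, hx, hz⟩
    refine ⟨-x, fun i => by simpa using hx i, ?_⟩
    simp [← hz]
  · rintro ⟨x, hx, rfl⟩
    exact ⟨-x, hx, by simp⟩

theorem weightedSum_append {m n : ℕ} (lam : Fin m → ℝ) (mu : Fin n → ℝ)
    (S : Fin m → Set X) (T : Fin n → Set X) :
    weightedSum (Fin.append lam mu) (Fin.append S T) = weightedSum lam S + weightedSum mu T := by
  ext z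
  simp only [weightedSum, mem_add, mem_ofPred_eq, Fin.sum_univ_add, Fin.append_left,
    Fin.append_right]
  constructor
  · rintro ⟨x, hx, rfl⟩
    refine ⟨_, ⟨fun i => x (Fin.castAdd n i), fun i => ?_, rfl⟩,
      _, ⟨fun i => x (Fin.natAdd m i), fun i => ?_, rfl⟩, rfl⟩
    · simpa using hx (Fin.castAdd n i)
    · simpa using hx (Fin.natAdd m i)
  · rintro ⟨_, ⟨x, hx, rfl⟩, _, ⟨y, hy, rfl⟩, rfl⟩
    refine ⟨Fin.append x y, Fin.addCases (fun i => ?_) (fun i => ?_), by simp⟩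
    · simpa using hx i
    · simpa using hy i

theorem IsSlice.neg {S : Set X} (hS : IsSlice S) : IsSlice (-S) := by
  obtain ⟨f, α, hf, hα, rfl⟩ := hS
  exact ⟨-f, α, by rw [norm_neg, hf], hα, by ext x; simp⟩

theorem IsCCS.neg {C : Set X} (hC : IsCCS C) : IsCCS (-C) := by
  obtain ⟨n, lam, S, hn, hlam, hsum, hS, rfl⟩ := isCCS_iff.mp hC
  exact isCCS_iff.mpr ⟨n, lam, -S, hn, hlam, hsum, fun i => (hS i).neg, neg_weightedSum lam S⟩

theorem IsCCS.smul_add_smul {C D : Set X} (hC : IsCCS C) (hD : IsCCS D) {t : ℝ}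
    (ht₀ : 0 ≤ t) (ht₁ : t ≤ 1) : IsCCS (t • C + (1 - t) • D) := by
  obtain ⟨m, lam, S, hm, hlam, hlam_sum, hS, rfl⟩ := isCCS_iff.mp hC
  obtain ⟨n, mu, T, -, hmu, hmu_sum, hT, rfl⟩ := isCCS_iff.mp hD
  have weight_mem {s a : ℝ} (hs₀ : 0 ≤ s) (hs₁ : s ≤ 1) (ha : 0 ≤ a ∧ a ≤ 1) :
      0 ≤ s * a ∧ s * a ≤ 1 :=
    ⟨mul_nonneg hs₀ ha.1, mul_le_one₀ hs₁ ha.1 ha.2⟩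
  refine isCCS_iff.mpr ⟨m + n, Fin.append (t • lam) ((1 - t) • mu), Fin.append S T,
    by omega, Fin.addCases (fun i => by simpa using weight_mem ht₀ ht₁ (hlam i))
      (fun i => by simpa using weight_mem (by linarith) (by linarith) (hmu i)), ?_,
    Fin.addCases (fun i => by simpa using hS i) (fun i => by simpa using hT i), ?_⟩
  · simp [Fin.sum_univ_add, ← Finset.mul_sum, hlam_sum, hmu_sum]
  · rw [weightedSum_append, smul_weightedSum, smul_weightedSum]

end

theorem diam_attained_of_ccs_meets_sphere_general
    {X : Type*} [NormedAddCommGroup X] [NormedSpace ℝ X]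
    (h : ∀ C : Set X, IsCCS C → (C ∩ sphere (0 : X) 1).Nonempty) :
    ∀ C : Set X, IsCCS C → ∃ x ∈ C, ∃ y ∈ C, ‖x - y‖ = 2 := by
  intro C hC
  obtain ⟨_, ⟨_, ⟨x, hx, rfl⟩, _, ⟨w, hw, rfl⟩, rfl⟩, hz⟩ :=
    h _ (hC.smul_add_smul hC.neg (t := 2⁻¹) (by norm_num) (by norm_num))
  rw [mem_sphere_zero_iff_norm] at hz
  refine ⟨x, hx, -w, hw, ?_⟩
  calc ‖x - -w‖ = ‖(2 : ℝ) • ((2⁻¹ : ℝ) • x + (1 - 2⁻¹ : ℝ) • w)‖ := by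
        congr 1; module
    _ = 2 := by rw [norm_smul, hz]; norm_num

theorem diam_attained_of_ccs_meets_sphere
    {X : Type*} [NormedAddCommGroup X] [NormedSpace ℝ X] [CompleteSpace X]
    (h : ∀ C : Set X, IsCCS C → (C ∩ sphere (0 : X) 1).Nonempty) :
    ∀ C : Set X, IsCCS C → ∃ x ∈ C, ∃ y ∈ C, ‖x - y‖ = 2 :=
  diam_attained_of_ccs_meets_sphere_general h
end
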